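/- arXiv:2001.00625 — 2 statements merged into one kernel-verified Lean document; each statement's English description precedes it below -/
import Mathlib

section
/- Let n ≥ 2. The map s on the partition monoid of [±n] defined by s(I) = I ⊔ I⁻, where I⁻ is the image of I under the negation involution, is a monoid homomorphism whose range is exactly the set SP_n of signed partitions, and its kernel congruence {(I, J) : s(I) = s(J)} equals the congruence generated by the set Q of pairs (μ_{i,j}, μ_{−j,−i}) for i < j in [±n]. -/
instance setoidCommMonoid (α : Type*) : CommMonoid (Setoid α) where
  mul := (· ⊔ ·)
  one := ⊥
  mul_assoc := sup_assoc
  one_mul := bot_sup_eq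
  mul_one := sup_bot_eq
  mul_comm := sup_comm

def muSet {α : Type*} (X : Set α) : Setoid α :=
  Relation.EqvGen.setoid (fun x y => x ∈ X ∧ y ∈ X)

def mu {α : Type*} (i j : α) : Setoid α := muSet {i, j}

/-- `[±n]`: nonzero integers of absolute value at most `n`, with the order from `ℤ`. -/
abbrev PM (n : ℕ) := {k : ℤ // k ≠ 0 ∧ |k| ≤ (n : ℤ)}

namespace PM

/-- The negation involution `k ↦ -k` on `[±n]`. -/
def neg {n : ℕ} (x : PM n) : PM n :=
  ⟨-x.1, by obtain ⟨h1, h2⟩ := x.2; exact ⟨neg_ne_zero.mpr h1, by rwa [abs_neg]⟩⟩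

@[simp] theorem neg_neg {n : ℕ} (x : PM n) : x.neg.neg = x := Subtype.ext (by simp [neg])

theorem neg_lt_neg {n : ℕ} {x y : PM n} (h : x < y) : y.neg < x.neg := by
  have h' : x.1 < y.1 := Subtype.coe_lt_coe.mpr h
  rw [← Subtype.coe_lt_coe]
  show -y.1 < -x.1
  omega

theorem neg_lt_pos {n : ℕ} {x y : PM n} (hx : 0 < x.1) (hy : 0 < y.1) : x.neg < y := by
  rw [← Subtype.coe_lt_coe]
  show -x.1 < y.1
  omega

theorem pos_ne_neg {n : ℕ} {x y : PM n} (hx : 0 < x.1) (hy : 0 < y.1) : y ≠ x.neg := by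
  intro h
  have : y.1 = -x.1 := congrArg Subtype.val h
  omega

theorem neg_lt_self {n : ℕ} {x : PM n} (hx : 0 < x.1) : x.neg < x := neg_lt_pos hx hx

/-- The absolute value map `x ↦ |x|` from `[±n]` to its positive part. -/
def abs {n : ℕ} (x : PM n) : PM n :=
  ⟨|x.1|, by obtain ⟨h1, h2⟩ := x.2; exact ⟨abs_ne_zero.mpr h1, by rwa [abs_abs]⟩⟩

end PM

/-- Image of a subset of `[±n]` under negation. -/
def negSet {n : ℕ} (K : Set (PM n)) : Set (PM n) := PM.neg '' K

/-- The partition `I⁻` transported along negation: `x ∼ y` in `negPart I` iff `-x ∼ -y` in `I`. -/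
def negPart {n : ℕ} (I : Setoid (PM n)) : Setoid (PM n) := Setoid.comap PM.neg I

/-- A set partition `I` of `[±n]` is *signed* if for every block `K` of `I` the set `-K` is
also a block; equivalently, `x ∼ y ↔ -x ∼ -y` for all `x, y`. -/
def IsSigned {n : ℕ} (I : Setoid (PM n)) : Prop :=
  ∀ x y : PM n, I x y ↔ I (PM.neg x) (PM.neg y)

/-- A *zero block* of a partition `I` is a block `K` with `-K = K`. -/
def IsZeroBlock {n : ℕ} (I : Setoid (PM n)) (K : Set (PM n)) : Prop :=
  K ∈ I.classes ∧ negSet K = K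

/-- A `Bₙ`-partition: a signed partition of `[±n]` with at most one zero block. -/
def IsBPart {n : ℕ} (I : Setoid (PM n)) : Prop :=
  IsSigned I ∧ Set.Subsingleton {K | IsZeroBlock I K}

/-- A *restricted* signed partition: all its zero blocks have more than two elements. -/
def IsRestricted {n : ℕ} (I : Setoid (PM n)) : Prop :=
  IsSigned I ∧ ∀ K : Set (PM n), IsZeroBlock I K → 2 < K.ncard

/-- A `Dₙ`-partition: a `Bₙ`-partition whose zero block (if present) has more than two
elements. -/
def IsDPart {n : ℕ} (I : Setoid (PM n)) : Prop :=
  IsBPart I ∧ ∀ K : Set (PM n), IsZeroBlock I K → 2 < K.ncard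

/-- For `i < j` in `[±n]`, the signed partition `ε_{i,j} = μ_{-j,-i} ⊔ μ_{i,j}`. -/
def eps {n : ℕ} (i j : PM n) : Setoid (PM n) := mu (PM.neg j) (PM.neg i) ⊔ mu i j

/-- The set `Q` of pairs `(μ_{i,j}, μ_{-j,-i})` for `i < j` in `[±n]`, viewed as a binary
relation on the partition monoid of `[±n]`. -/
def QRel (n : ℕ) : Setoid (PM n) → Setoid (PM n) → Prop := fun a b =>
  ∃ i j : PM n, i < j ∧ a = mu i j ∧ b = mu (PM.neg j) (PM.neg i)

/-!
Negation `I ↦ I⁻` is an involutive automorphism of the lattice of partitions, so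
`s(I) = I ⊔ I⁻` is a join homomorphism whose image is the set of its fixed points, the signed
partitions. For the kernel: in an idempotent monoid `a ≡ b` implies `a = a a ≡ a b`, and
`μ_{i,j} ≡ μ_{-j,-i} = μ_{i,j}⁻` modulo `Q`, so `μ_{i,j} ≡ s(μ_{i,j})`. Every partition of the
finite set `[±n]` is a finite join of such `μ`'s, hence `I ≡ s(I)` for all `I`, and
`s(I) = s(J)` forces `I ≡ J`. Conversely `s` identifies the two sides of every pair in `Q`.
-/

instance PM.finite (n : ℕ) : Finite (PM n) :=
  ((Set.finite_Icc (-(n : ℤ)) n).subset fun _ hk => abs_le.1 hk.2).to_subtype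

section Mu
variable {α : Type*}

theorem mu_rel_self (x y : α) : mu x y x y :=
  Relation.EqvGen.rel _ _ ⟨Set.mem_insert _ _, Set.mem_insert_iff.2 (Or.inr rfl)⟩

theorem mu_le {I : Setoid α} {x y : α} (h : I x y) : mu x y ≤ I := by
  apply Setoid.eqvGen_le
  rintro a b ⟨rfl | rfl, rfl | rfl⟩
  exacts [I.refl _, h, I.symm h, I.refl _]

theorem mu_comm (x y : α) : mu x y = mu y x := by
  rw [mu, mu, Set.pair_comm]

theorem mu_self (x : α) : mu x x = ⊥ :=
  le_bot_iff.1 (mu_le rfl)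

theorem Setoid.finset_prod_eq_sup {ι : Type*} (s : Finset ι) (f : ι → Setoid α) :
    ∏ i ∈ s, f i = s.sup f := by
  induction s using Finset.cons_induction with
  | empty => rfl
  | cons a s _ ih => rw [Finset.prod_cons, Finset.sup_cons, ih]; rfl

theorem Setoid.eq_prod_mu [Fintype α] (I : Setoid α) [DecidableRel I] :
    I = ∏ p ∈ Finset.univ.filter fun p : α × α => I p.1 p.2, mu p.1 p.2 := by
  rw [Setoid.finset_prod_eq_sup]
  refine le_antisymm (fun x y hxy => ?_)
    (Finset.sup_le fun p hp => mu_le (Finset.mem_filter.1 hp).2)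
  have hmem : (x, y) ∈ Finset.univ.filter fun p : α × α => I p.1 p.2 := by simpa using hxy
  exact Finset.le_sup (f := fun p : α × α => mu p.1 p.2) hmem (mu_rel_self x y)

end Mu

theorem Con.rel_mul_of_isIdempotentElem {M : Type*} [Mul M] (c : Con M) {a b : M}
    (ha : IsIdempotentElem a) (h : c a b) : c a (a * b) := by
  have := c.mul (c.refl a) h
  rwa [ha.eq] at this

section Negation
variable {n : ℕ}

theorem negPart_rel (I : Setoid (PM n)) (x y : PM n) : negPart I x y ↔ I x.neg y.neg := Iff.rfl

theorem negPart_negPart (I : Setoid (PM n)) : negPart (negPart I) = I :=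
  Setoid.ext fun x y => by simp only [negPart_rel, PM.neg_neg]

theorem negPart_le_negPart_iff {I J : Setoid (PM n)} : negPart I ≤ negPart J ↔ I ≤ J := by
  refine ⟨fun h x y hxy => ?_, fun h _ _ hxy => h hxy⟩
  simpa only [negPart_rel, PM.neg_neg] using
    @h x.neg y.neg (by simpa only [negPart_rel, PM.neg_neg] using hxy)

def negPartIso (n : ℕ) : Setoid (PM n) ≃o Setoid (PM n) where
  toFun := negPart
  invFun := negPart
  left_inv := negPart_negPart
  right_inv := negPart_negPart
  map_rel_iff' := negPart_le_negPart_iff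

theorem negPart_sup (I J : Setoid (PM n)) : negPart (I ⊔ J) = negPart I ⊔ negPart J :=
  (negPartIso n).map_sup I J

theorem negPart_bot : negPart (⊥ : Setoid (PM n)) = ⊥ :=
  (negPartIso n).map_bot

theorem isSigned_iff_negPart_eq {I : Setoid (PM n)} : IsSigned I ↔ negPart I = I :=
  ⟨fun h => Setoid.ext fun x y => (h x y).symm, fun h x y => (Setoid.ext_iff.1 h x y).symm⟩

theorem mu_neg_le_negPart_mu (x y : PM n) : mu x.neg y.neg ≤ negPart (mu x y) := by
  apply mu_le
  simpa only [negPart_rel, PM.neg_neg] using mu_rel_self x y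

theorem negPart_mu (x y : PM n) : negPart (mu x y) = mu x.neg y.neg := by
  refine le_antisymm ?_ (mu_neg_le_negPart_mu x y)
  rw [← negPart_le_negPart_iff, negPart_negPart]
  simpa only [PM.neg_neg] using mu_neg_le_negPart_mu x.neg y.neg

end Negation

def signing (n : ℕ) : Setoid (PM n) →* Setoid (PM n) where
  toFun I := I ⊔ negPart I
  map_one' := by
    change ⊥ ⊔ negPart ⊥ = ⊥
    rw [negPart_bot, sup_bot_eq]
  map_mul' I J := by
    change I ⊔ J ⊔ negPart (I ⊔ J) = I ⊔ negPart I ⊔ (J ⊔ negPart J)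
    rw [negPart_sup, sup_sup_sup_comm]

section Signing
variable {n : ℕ}

theorem signing_apply (I : Setoid (PM n)) : signing n I = I ⊔ negPart I := rfl

theorem range_signing : Set.range (signing n) = {I | IsSigned I} := by
  ext I
  refine ⟨?_, fun h => ⟨I, by rw [signing_apply, isSigned_iff_negPart_eq.1 h, sup_idem]⟩⟩
  rintro ⟨J, rfl⟩
  rw [Set.mem_ofPred_eq, isSigned_iff_negPart_eq, signing_apply, negPart_sup, negPart_negPart,
    sup_comm]

theorem conGen_QRel_mu_negPart (x y : PM n) : conGen (QRel n) (mu x y) (mu x.neg y.neg) := by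
  rcases lt_trichotomy x y with h | rfl | h
  · rw [mu_comm x.neg]
    exact ConGen.Rel.of _ _ ⟨x, y, h, rfl, rfl⟩
  · rw [mu_self, mu_self]
    exact (conGen (QRel n)).refl ⊥
  · rw [mu_comm x]
    exact ConGen.Rel.of _ _ ⟨y, x, h, rfl, rfl⟩

theorem conGen_QRel_mu_signing (x y : PM n) : conGen (QRel n) (mu x y) (signing n (mu x y)) := by
  rw [signing_apply, negPart_mu]
  exact (conGen (QRel n)).rel_mul_of_isIdempotentElem (sup_idem _) (conGen_QRel_mu_negPart x y)

theorem conGen_QRel_signing (I : Setoid (PM n)) : conGen (QRel n) I (signing n I) := by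
  classical
  have := Fintype.ofFinite (PM n)
  rw [Setoid.eq_prod_mu I, map_prod (signing n)]
  exact (conGen (QRel n)).finsetProd _ fun p _ => conGen_QRel_mu_signing p.1 p.2

theorem signing_mu_eq (i j : PM n) : signing n (mu i j) = signing n (mu j.neg i.neg) := by
  rw [signing_apply, signing_apply, negPart_mu, negPart_mu, PM.neg_neg, PM.neg_neg,
    mu_comm j i, mu_comm j.neg, sup_comm]

theorem ker_signing : Con.ker (signing n) = conGen (QRel n) := by
  refine le_antisymm (fun I J h => ?_) (Con.conGen_le.2 ?_)
  · rw [Con.ker_rel] at h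
    exact (conGen_QRel_signing I).trans (h ▸ (conGen_QRel_signing J).symm)
  · rintro _ _ ⟨i, j, -, rfl, rfl⟩
    exact (Con.ker_rel _).2 (signing_mu_eq i j)

end Signing

theorem signing_hom_range_and_ker_general (n : ℕ) :
    ∃ s : Setoid (PM n) →* Setoid (PM n),
      (∀ I : Setoid (PM n), s I = I ⊔ negPart I) ∧
      Set.range s = {I | IsSigned I} ∧
      Con.ker s = conGen (QRel n) :=
  ⟨signing n, signing_apply, range_signing, ker_signing⟩

/-- The map `s(I) = I ⊔ I⁻` on the partition monoid of `[±n]` is a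
monoid homomorphism whose range is exactly the set `SPₙ` of signed partitions, and whose
kernel congruence `{(I, J) : s(I) = s(J)}` equals the congruence generated by `Q`. -/
theorem signing_hom_range_and_ker (n : ℕ) (hn : 2 ≤ n) :
    ∃ s : Setoid (PM n) →* Setoid (PM n),
      (∀ I : Setoid (PM n), s I = I ⊔ negPart I) ∧
      Set.range s = {I | IsSigned I} ∧
      Con.ker s = conGen (QRel n) :=
  signing_hom_range_and_ker_general n
end

section
/- Let n ≥ 2 and equip P_n^B with the product I ·_B J := the least B_n-partition K with I ≤ K and J ≤ K (which exists). Then there is a bijection F from the monoid presented by generators e_{i,j} (i < j in [±n]) subject to the relations (PB1) e_{i,j}·e_{i,j} = e_{i,j}; (PB2) e_{i,j}·e_{r,s} = e_{r,s}·e_{i,j}; (PB3) e_{i,j}·e_{j,k} = e_{i,j}·e_{i,k} = e_{i,k}·e_{j,k} for i < j < k in [±n]; (PB4) e_{−i,i}·e_{−j,j} = e_{−i,j}·e_{i,j} for 1 ≤ i < j ≤ n; (PB5) e_{i,j} = e_{−j,−i}, onto P_n^B, such that F maps the identity to ⊥, F maps the class of e_{i,j} to ε_{i,j}, and F(x·y)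 = F(x) ·_B F(y) for all x, y. -/
/-- Generators `e_{i,j}` for `i < j` in `[±n]`. -/
abbrev BGen (n : ℕ) := {p : PM n × PM n // p.1 < p.2}

open FreeMonoid in
/-- The defining relations (PB1)–(PB5) of the monoid of `Bₙ`-partitions. -/
inductive BRel (n : ℕ) : FreeMonoid (BGen n) → FreeMonoid (BGen n) → Prop
  /-- (PB1) `e_{i,j} e_{i,j} = e_{i,j}`. -/
  | PB1 (a : BGen n) : BRel n (of a * of a) (of a)
  /-- (PB2) `e_{i,j} e_{r,s} = e_{r,s} e_{i,j}`. -/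
  | PB2 (a b : BGen n) : BRel n (of a * of b) (of b * of a)
  /-- (PB3), first equality: `e_{i,j} e_{j,k} = e_{i,j} e_{i,k}` for `i < j < k`. -/
  | PB3a (i j k : PM n) (hij : i < j) (hjk : j < k) :
      BRel n (of ⟨(i, j), hij⟩ * of ⟨(j, k), hjk⟩)
        (of ⟨(i, j), hij⟩ * of ⟨(i, k), hij.trans hjk⟩)
  /-- (PB3), second equality: `e_{i,j} e_{j,k} = e_{i,k} e_{j,k}` for `i < j < k`. -/
  | PB3b (i j k : PM n) (hij : i < j) (hjk : j < k) :
      BRel n (of ⟨(i, j), hij⟩ * of ⟨(j, k), hjk⟩)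
        (of ⟨(i, k), hij.trans hjk⟩ * of ⟨(j, k), hjk⟩)
  /-- (PB4) `e_{-i,i} e_{-j,j} = e_{-i,j} e_{i,j}` for positive `i < j`. -/
  | PB4 (i j : PM n) (hi : 0 < i.1) (hj : 0 < j.1) (hij : i < j) :
      BRel n (of ⟨(PM.neg i, i), PM.neg_lt_self hi⟩ * of ⟨(PM.neg j, j), PM.neg_lt_self hj⟩)
        (of ⟨(PM.neg i, j), PM.neg_lt_pos hi hj⟩ * of ⟨(i, j), hij⟩)
  /-- (PB5) `e_{i,j} = e_{-j,-i}`. -/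
  | PB5 (i j : PM n) (hij : i < j) :
      BRel n (of ⟨(i, j), hij⟩) (of ⟨(PM.neg j, PM.neg i), PM.neg_lt_neg hij⟩)


/-!
The relations (PB1)–(PB5) hold among the `ε_{i,j}` in the lattice of `Bₙ`-partitions, whose
join is `·_B`, so `e_{i,j} ↦ ε_{i,j}` induces a monoid map `F`; it is onto because every
`Bₙ`-partition is the join of the `ε_{i,j}` below it. For injectivity, the pairs `{i, j}` with
`x · e_{i,j} = x` are the related pairs of a `Bₙ`-partition: transitivity comes from (PB3),
signedness from (PB5) and uniqueness of the zero block from (PB4). It contains `F x`, so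
`F x ≤ F y` forces `y · x = y`, and `F x = F y` gives `x = x · y = y · x = y`.
-/

theorem mul_comm_of_closure_eq_top {M : Type*} [Monoid M] {s : Set M}
    (hs : Submonoid.closure s = ⊤) (hcomm : ∀ a ∈ s, ∀ b ∈ s, a * b = b * a) (x y : M) :
    x * y = y * x := by
  have h := Submonoid.closure_le_centralizer_centralizer s
  rw [hs] at h
  exact Set.centralizer_centralizer_comm_of_comm hcomm x (h trivial) y (h trivial)

theorem mul_eq_self_of_dvd {M : Type*} [CommMonoid M] {x y c : M} (hc : IsIdempotentElem c)
    (hcy : c ∣ y) (hxy : x * y = x) : x * c = x := by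
  obtain ⟨d, rfl⟩ := hcy
  calc x * c = x * (c * d) * c := by rw [hxy]
    _ = x * (c * c * d) := by ac_rfl
    _ = x := by rw [hc.eq, hxy]

theorem mu_le_iff {α : Type*} {i j : α} {K : Setoid α} : mu i j ≤ K ↔ K i j := by
  refine ⟨fun h => h (Relation.EqvGen.rel _ _ ⟨by simp, by simp⟩),
    fun h => Setoid.eqvGen_le ?_⟩
  rintro x y ⟨rfl | rfl, rfl | rfl⟩
  exacts [K.refl' _, h, K.symm' h, K.refl' _]

namespace PM

variable {n : ℕ}

theorem neg_injective : Function.Injective (neg : PM n → PM n) :=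
  Function.LeftInverse.injective neg_neg

theorem neg_ne_self (x : PM n) : x.neg ≠ x := fun h => by
  have := congrArg Subtype.val h
  have := x.2.1
  simp only [neg] at *
  omega

theorem exists_pos (x : PM n) : ∃ p : PM n, 0 < p.1 ∧ (x = p ∨ x = p.neg) := by
  refine ⟨x.abs, abs_pos.2 x.2.1, ?_⟩
  rcases abs_choice x.1 with h | h
  · exact .inl (Subtype.ext h.symm)
  · exact .inr (Subtype.ext (by simp only [neg, abs, h, _root_.neg_neg]))

instance : Finite (PM n) :=
  Set.Finite.to_subtype <| (Set.finite_Icc (-(n : ℤ)) n).subset fun _ hk => abs_le.1 hk.2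

end PM

section IsBPart

variable {n : ℕ}

theorem isZeroBlock_iff {I : Setoid (PM n)} (hI : IsSigned I) {K : Set (PM n)} :
    IsZeroBlock I K ↔ ∃ x, I x x.neg ∧ K = {y | I x y} := by
  constructor
  · rintro ⟨⟨x, rfl⟩, hK⟩
    have hx : x.neg ∈ negSet {y | I y x} := ⟨x, I.refl' x, rfl⟩
    rw [hK] at hx
    exact ⟨x, I.symm' hx, Set.ext fun y => ⟨I.symm', I.symm'⟩⟩
  · rintro ⟨x, hx, rfl⟩
    refine ⟨⟨x, Set.ext fun y => ⟨I.symm', I.symm'⟩⟩,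
      Set.ext fun y => ⟨?_, fun hy => ?_⟩⟩
    · rintro ⟨z, hz, rfl⟩
      exact I.trans' hx ((hI x z).1 hz)
    · exact ⟨y.neg, I.trans' hx ((hI x y).1 hy), PM.neg_neg y⟩

theorem isBPart_iff {I : Setoid (PM n)} :
    IsBPart I ↔ IsSigned I ∧ ∀ x y, I x x.neg → I y y.neg → I x y := by
  refine and_congr_right fun hI => ⟨fun h x y hx hy => ?_, fun h K hK L hL => ?_⟩
  · have := h ((isZeroBlock_iff hI).2 ⟨x, hx, rfl⟩) ((isZeroBlock_iff hI).2 ⟨y, hy, rfl⟩)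
    exact (Set.ext_iff.1 this y).2 (I.refl' y)
  · obtain ⟨x, hx, rfl⟩ := (isZeroBlock_iff hI).1 hK
    obtain ⟨y, hy, rfl⟩ := (isZeroBlock_iff hI).1 hL
    exact Set.ext fun z => ⟨I.trans' (I.symm' (h x y hx hy)), I.trans' (h x y hx hy)⟩

theorem isBPart_bot : IsBPart (⊥ : Setoid (PM n)) :=
  isBPart_iff.2 ⟨fun _ _ => PM.neg_injective.eq_iff.symm,
    fun x _ hx => absurd hx.symm (PM.neg_ne_self x)⟩

theorem isBPart_sInf {S : Set (Setoid (PM n))} (hS : ∀ I ∈ S, IsBPart I) :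
    IsBPart (sInf S) := by
  simp only [isBPart_iff] at hS ⊢
  refine ⟨fun x y => ?_, fun x y hx hy => ?_⟩
  · simp only [Setoid.sInf_iff]
    exact forall₂_congr fun I hI => (hS I hI).1 x y
  · rw [Setoid.sInf_iff] at hx hy ⊢
    exact fun I hI => (hS I hI).2 x y (hx I hI) (hy I hI)

theorem eps_rel_iff (i j x y : PM n) :
    eps i j x y ↔ x = y ∨ ((x = i ∨ x = j) ∧ (y = i ∨ y = j)) ∨
      ((x = i.neg ∨ x = j.neg) ∧ (y = i.neg ∨ y = j.neg)) := by
  let R : Setoid (PM n) :=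
    { r := fun x y => x = y ∨ ((x = i ∨ x = j) ∧ (y = i ∨ y = j)) ∨
        ((x = i.neg ∨ x = j.neg) ∧ (y = i.neg ∨ y = j.neg))
      iseqv := ⟨by grind, by grind, by grind [PM.neg_ne_self, PM.neg_neg, PM.neg_injective]⟩ }
  refine ⟨fun h => (sup_le (mu_le_iff.2 ?_) (mu_le_iff.2 ?_) : eps i j ≤ R) h, ?_⟩
  · exact .inr (.inr ⟨.inr rfl, .inl rfl⟩)
  · exact .inr (.inl ⟨.inl rfl, .inr rfl⟩)
  · have hij : eps i j i j := (le_sup_right : mu i j ≤ eps i j) (mu_le_iff.1 le_rfl)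
    have hji : eps i j j.neg i.neg := (le_sup_left : mu j.neg i.neg ≤ _) (mu_le_iff.1 le_rfl)
    rintro (rfl | ⟨rfl | rfl, rfl | rfl⟩ | ⟨rfl | rfl, rfl | rfl⟩) <;>
      first | exact Setoid.refl' _ _ | assumption | exact Setoid.symm' _ ‹_›

theorem isBPart_eps (i j : PM n) : IsBPart (eps i j) := by
  have hneg (x y : PM n) : x.neg = y ↔ x = y.neg := by
    rw [← PM.neg_injective.eq_iff, PM.neg_neg]
  have hzero (x : PM n) (hx : eps i j x x.neg) : x = i ∨ x = j := by
    rcases (eps_rel_iff i j x x.neg).1 hx with h | ⟨h, -⟩ | ⟨-, h⟩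
    · exact absurd h.symm (PM.neg_ne_self x)
    · exact h
    · simpa only [PM.neg_injective.eq_iff] using h
  refine isBPart_iff.2 ⟨fun x y => ?_, fun x y hx hy =>
    (eps_rel_iff i j x y).2 (.inr (.inl ⟨hzero x hx, hzero y hy⟩))⟩
  simp only [eps_rel_iff, hneg, PM.neg_neg]
  tauto

theorem eps_le_iff {K : Setoid (PM n)} (hK : IsSigned K) {i j : PM n} : eps i j ≤ K ↔ K i j :=
  ⟨fun h => h ((eps_rel_iff i j i j).2 (.inr (.inl ⟨.inl rfl, .inr rfl⟩))),
    fun h => sup_le (mu_le_iff.2 (K.symm' ((hK i j).1 h))) (mu_le_iff.2 h)⟩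

end IsBPart

/-- `Pₙᴮ`; a complete lattice because `Bₙ`-partitions are closed under arbitrary meets. -/
abbrev BPartition (n : ℕ) := {I : Setoid (PM n) // IsBPart I}

namespace BPartition

variable {n : ℕ}

instance : CompleteLattice (BPartition n) where
  __ := (ClosureOperator.ofCompletePred IsBPart fun _ => isBPart_sInf).gi.liftCompleteLattice
  -- keep the subtype order, so that `≤` on `BPartition n` has a single instance
  toPartialOrder := inferInstance

/-- The product `·_B`. -/
instance : CommMonoid (BPartition n) where
  mul := (· ⊔ ·)
  one := ⊥
  mul_assoc := sup_assoc
  one_mul := bot_sup_eq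
  mul_one := sup_bot_eq
  mul_comm := sup_comm

theorem mul_def (I J : BPartition n) : I * J = I ⊔ J := rfl

theorem one_def : (1 : BPartition n) = ⊥ := rfl

theorem coe_bot : ((⊥ : BPartition n) : Setoid (PM n)) = ⊥ :=
  le_bot_iff.1 (bot_le (a := (⟨⊥, isBPart_bot⟩ : BPartition n)))

theorem isLeast_coe_sup (I J : BPartition n) :
    IsLeast {K | IsBPart K ∧ I.1 ≤ K ∧ J.1 ≤ K} (I ⊔ J).1 := by
  refine ⟨⟨(I ⊔ J).2, le_sup_left (b := J), le_sup_right (a := I)⟩, ?_⟩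
  rintro K ⟨hK, hI, hJ⟩
  exact sup_le (a := I) (b := J) (c := ⟨K, hK⟩) hI hJ

def eps (a : BGen n) : BPartition n := ⟨_root_.eps a.1.1 a.1.2, isBPart_eps _ _⟩

theorem eps_le_iff {a : BGen n} {K : BPartition n} : eps a ≤ K ↔ K.1 a.1.1 a.1.2 :=
  _root_.eps_le_iff (isBPart_iff.1 K.2).1

theorem exists_finset_sup_eps (K : BPartition n) :
    ∃ s : Finset (BGen n), s.sup eps = K := by
  set s := (Set.toFinite {a | eps a ≤ K}).toFinset
  have hs {a : BGen n} : a ∈ s ↔ eps a ≤ K := Set.Finite.mem_toFinset _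
  have hlt {x y : PM n} (hxy : x < y) (h : K.1 x y) : (s.sup eps).1 x y :=
    eps_le_iff.1 <| Finset.le_sup (f := eps) <|
      hs.2 (eps_le_iff (a := ⟨(x, y), hxy⟩).2 h)
  refine ⟨s, le_antisymm (Finset.sup_le fun a ha => hs.1 ha) fun x y h => ?_⟩
  rcases lt_trichotomy x y with hxy | rfl | hxy
  · exact hlt hxy h
  · exact Setoid.refl' _ x
  · exact Setoid.symm' _ (hlt hxy (K.1.symm' h))

theorem eps_sup_eps_eq {a b c d : BGen n}
    (h : ∀ K : BPartition n,
      K.1 a.1.1 a.1.2 ∧ K.1 b.1.1 b.1.2 ↔ K.1 c.1.1 c.1.2 ∧ K.1 d.1.1 d.1.2) :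
    eps a * eps b = eps c * eps d :=
  eq_of_forall_ge_iff fun K => by simpa only [mul_def, sup_le_iff, eps_le_iff] using h K

theorem lift_eps_eq_of_rel {u v : FreeMonoid (BGen n)} (h : BRel n u v) :
    FreeMonoid.lift eps u = FreeMonoid.lift eps v := by
  cases h with
  | PB1 a => exact sup_idem _
  | PB2 a b => exact sup_comm _ _
  | PB3a i j k hij hjk =>
    exact eps_sup_eps_eq fun K => ⟨fun ⟨h₁, h₂⟩ => ⟨h₁, K.1.trans' h₁ h₂⟩,
      fun ⟨h₁, h₂⟩ => ⟨h₁, K.1.trans' (K.1.symm' h₁) h₂⟩⟩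
  | PB3b i j k hij hjk =>
    exact eps_sup_eps_eq fun K => ⟨fun ⟨h₁, h₂⟩ => ⟨K.1.trans' h₁ h₂, h₂⟩,
      fun ⟨h₁, h₂⟩ => ⟨K.1.trans' h₁ (K.1.symm' h₂), h₂⟩⟩
  | PB4 i j hi hj hij =>
    -- both sides say that `±i` and `±j` all lie in the zero block of `K`
    refine eps_sup_eps_eq fun K => ?_
    obtain ⟨hsigned, hzero⟩ := isBPart_iff.1 K.2
    have hnn := PM.neg_neg i
    constructor
    · rintro ⟨h₁, h₂⟩
      exact ⟨hzero _ _ (hnn.symm ▸ h₁) (K.1.symm' h₂),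
        hzero _ _ (K.1.symm' h₁) (K.1.symm' h₂)⟩
    · rintro ⟨h₁, h₂⟩
      have h₃ : K.1 i j.neg := by simpa only [hnn] using (hsigned _ _).1 h₁
      exact ⟨K.1.trans' h₁ (K.1.symm' h₂), K.1.trans' (K.1.symm' h₃) h₂⟩
  | PB5 i j hij =>
    refine eq_of_forall_ge_iff fun K => ?_
    simp only [FreeMonoid.lift_eval_of, eps_le_iff, (isBPart_iff.1 K.2).1 i j]
    exact ⟨K.1.symm', K.1.symm'⟩

end BPartition

namespace BRel

def epsHom (n : ℕ) : PresentedMonoid (BRel n) →* BPartition n :=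
  PresentedMonoid.lift BPartition.eps fun _ _ => BPartition.lift_eps_eq_of_rel

variable {n : ℕ}

instance : CommMonoid (PresentedMonoid (BRel n)) where
  mul_comm := mul_comm_of_closure_eq_top (PresentedMonoid.closure_range_of _) <| by
    rintro _ ⟨a, rfl⟩ _ ⟨b, rfl⟩
    exact PresentedMonoid.mk_eq_mk_of_rel (.PB2 a b)

theorem isIdempotentElem_of (a : BGen n) : IsIdempotentElem (PresentedMonoid.of (BRel n) a) :=
  PresentedMonoid.mk_eq_mk_of_rel (.PB1 a)

/-- `e_{i,j}` for an unordered pair, with `e_{i,i} = 1`. -/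
noncomputable def edge (i j : PM n) : PresentedMonoid (BRel n) :=
  if h : min i j < max i j then PresentedMonoid.of (BRel n) ⟨(min i j, max i j), h⟩ else 1

theorem edge_comm (i j : PM n) : edge i j = edge j i := by
  simp only [edge, min_comm i j, max_comm i j]

theorem edge_self (i : PM n) : edge i i = 1 := by
  simp [edge]

theorem edge_of_lt {i j : PM n} (h : i < j) :
    edge i j = PresentedMonoid.of (BRel n) ⟨(i, j), h⟩ := by
  simp [edge, min_eq_left h.le, max_eq_right h.le, h]

theorem isIdempotentElem_edge (i j : PM n) : IsIdempotentElem (edge i j) := by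
  unfold edge
  split_ifs
  exacts [isIdempotentElem_of _, mul_one 1]

theorem edge_neg (i j : PM n) : edge i.neg j.neg = edge i j := by
  rcases lt_trichotomy i j with h | rfl | h
  · rw [edge_comm, edge_of_lt h, edge_of_lt (PM.neg_lt_neg h)]
    exact (PresentedMonoid.mk_eq_mk_of_rel (.PB5 i j h)).symm
  · rw [edge_self, edge_self]
  · rw [edge_comm i, edge_of_lt h, edge_of_lt (PM.neg_lt_neg h)]
    exact (PresentedMonoid.mk_eq_mk_of_rel (.PB5 j i h)).symm

theorem edge_mul_edge_of_lt {a b c : PM n} (hab : a < b) (hbc : b < c) :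
    edge a b * edge b c = edge a b * edge a c ∧ edge a b * edge b c = edge a c * edge b c := by
  rw [edge_of_lt hab, edge_of_lt hbc, edge_of_lt (hab.trans hbc)]
  exact ⟨PresentedMonoid.mk_eq_mk_of_rel (.PB3a a b c hab hbc),
    PresentedMonoid.mk_eq_mk_of_rel (.PB3b a b c hab hbc)⟩

theorem edge_neg_mul_edge_neg {p q : PM n} (hp : 0 < p.1) (hq : 0 < q.1) (hpq : p < q) :
    edge p.neg p * edge q.neg q = edge p.neg q * edge p q := by
  rw [edge_of_lt (PM.neg_lt_self hp), edge_of_lt (PM.neg_lt_self hq),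
    edge_of_lt (PM.neg_lt_pos hp hq), edge_of_lt hpq]
  exact PresentedMonoid.mk_eq_mk_of_rel (.PB4 p q hp hq hpq)

section Absorb

variable {x : PresentedMonoid (BRel n)}

theorem absorbs_edge_trans {i j k : PM n} (hij : x * edge i j = x) (hjk : x * edge j k = x) :
    x * edge i k = x := by
  wlog hik : i < k generalizing i k
  · rcases (not_lt.1 hik).eq_or_lt with rfl | hki
    · rw [edge_self, mul_one]
    · rw [edge_comm] at hij hjk ⊢
      exact this hjk hij hki
  have hprod : x * (edge i j * edge j k) = x := by rw [← mul_assoc, hij, hjk]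
  rcases lt_trichotomy j i with hji | rfl | hij'
  · obtain ⟨h₁, h₂⟩ := edge_mul_edge_of_lt hji hik
    rw [edge_comm i, ← h₁, h₂] at hprod
    exact mul_eq_self_of_dvd (isIdempotentElem_edge i k) (dvd_mul_left _ _) hprod
  · exact hjk
  rcases lt_trichotomy j k with hjk' | rfl | hkj
  · rw [(edge_mul_edge_of_lt hij' hjk').2] at hprod
    exact mul_eq_self_of_dvd (isIdempotentElem_edge i k) (dvd_mul_right _ _) hprod
  · exact hij
  · obtain ⟨h₁, h₂⟩ := edge_mul_edge_of_lt hik hkj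
    rw [edge_comm j k, ← h₂] at hprod
    exact mul_eq_self_of_dvd (isIdempotentElem_edge i k) (dvd_mul_right _ _) hprod

theorem absorbs_edge_of_pos {p q : PM n} (hp : 0 < p.1) (hq : 0 < q.1)
    (hpp : x * edge p.neg p = x) (hqq : x * edge q.neg q = x) :
    x * edge p q = x ∧ x * edge p.neg q = x := by
  wlog hpq : p < q generalizing p q
  · rcases (not_lt.1 hpq).eq_or_lt with rfl | hqp
    · rw [edge_self, mul_one]
      exact ⟨rfl, hpp⟩
    · obtain ⟨h₁, h₂⟩ := this hq hp hqq hpp hqp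
      rw [← edge_neg, PM.neg_neg, edge_comm] at h₂
      rw [edge_comm] at h₁
      exact ⟨h₁, h₂⟩
  have hprod : x * (edge p.neg p * edge q.neg q) = x := by rw [← mul_assoc, hpp, hqq]
  rw [edge_neg_mul_edge_neg hp hq hpq] at hprod
  exact ⟨mul_eq_self_of_dvd (isIdempotentElem_edge _ _) (dvd_mul_left _ _) hprod,
    mul_eq_self_of_dvd (isIdempotentElem_edge _ _) (dvd_mul_right _ _) hprod⟩

theorem absorbs_edge_of_absorbs_edge_neg {u v : PM n} (hu : x * edge u u.neg = x)
    (hv : x * edge v v.neg = x) : x * edge u v = x := by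
  obtain ⟨p, hp, hup⟩ := PM.exists_pos u
  obtain ⟨q, hq, hvq⟩ := PM.exists_pos v
  have hp' : x * edge p.neg p = x := by
    rcases hup with rfl | rfl
    · rwa [edge_comm]
    · rwa [PM.neg_neg] at hu
  have hq' : x * edge q.neg q = x := by
    rcases hvq with rfl | rfl
    · rwa [edge_comm]
    · rwa [PM.neg_neg] at hv
  obtain ⟨h₁, h₂⟩ := absorbs_edge_of_pos hp hq hp' hq'
  rcases hup with rfl | rfl <;> rcases hvq with rfl | rfl
  · exact h₁
  · rwa [← edge_neg, PM.neg_neg]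
  · exact h₂
  · rwa [edge_neg]

def absorbPartition (x : PresentedMonoid (BRel n)) : BPartition n :=
  ⟨{ r := fun i j => x * edge i j = x
     iseqv := ⟨fun i => by rw [edge_self, mul_one], fun h => by rwa [edge_comm],
       absorbs_edge_trans⟩ },
    isBPart_iff.2 ⟨fun i j => show x * edge i j = x ↔ x * edge i.neg j.neg = x by rw [edge_neg],
      fun _ _ => absorbs_edge_of_absorbs_edge_neg⟩⟩

theorem absorbPartition_le_mul (x y : PresentedMonoid (BRel n)) :
    absorbPartition x ≤ absorbPartition (x * y) := fun i j (h : x * edge i j = x) =>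
  show x * y * edge i j = x * y by rw [mul_right_comm, h]

end Absorb

theorem epsHom_le_absorbPartition (x : PresentedMonoid (BRel n)) :
    epsHom n x ≤ absorbPartition x := by
  refine Submonoid.dense_induction _ (PresentedMonoid.closure_range_of _) ?_ ?_ ?_ x
  · rintro _ ⟨a, rfl⟩
    refine BPartition.eps_le_iff.2 ?_
    show _ * edge _ _ = _
    rw [edge_of_lt a.2]
    exact isIdempotentElem_of a
  · exact bot_le
  · intro x y hx hy
    rw [map_mul, BPartition.mul_def]
    exact sup_le (hx.trans (absorbPartition_le_mul x y))
      (hy.trans (mul_comm x y ▸ absorbPartition_le_mul y x))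

theorem mul_eq_self_of_epsHom_le {x y : PresentedMonoid (BRel n)} (h : epsHom n x ≤ epsHom n y) :
    y * x = y := by
  induction x using Submonoid.dense_induction _ (PresentedMonoid.closure_range_of _) with
  | mem _ hx =>
    obtain ⟨a, rfl⟩ := hx
    have := BPartition.eps_le_iff.1 (h.trans (epsHom_le_absorbPartition y))
    rwa [← edge_of_lt a.2]
  | one => exact mul_one y
  | mul x₁ x₂ h₁ h₂ =>
    rw [map_mul, BPartition.mul_def, sup_le_iff] at h
    rw [← mul_assoc, h₁ h.1, h₂ h.2]

theorem epsHom_injective : Function.Injective (epsHom n) := fun x y h =>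
  calc x = x * y := (mul_eq_self_of_epsHom_le h.ge).symm
    _ = y * x := mul_comm x y
    _ = y := mul_eq_self_of_epsHom_le h.le

theorem epsHom_surjective : Function.Surjective (epsHom n) := by
  intro K
  obtain ⟨s, rfl⟩ := BPartition.exists_finset_sup_eps K
  exact Finset.sup_induction (p := (· ∈ MonoidHom.mrange (epsHom n))) (one_mem _)
    (fun _ h₁ _ h₂ => mul_mem h₁ h₂) fun a _ => ⟨PresentedMonoid.of _ a, rfl⟩

end BRel

theorem presentedMonoid_bijection_PnB_general (n : ℕ) :
    ∃ F : PresentedMonoid (BRel n) → Setoid (PM n),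
      Function.Injective F ∧
      Set.range F = {I | IsBPart I} ∧
      F 1 = ⊥ ∧
      (∀ a : BGen n, F (PresentedMonoid.of (BRel n) a) = eps a.1.1 a.1.2) ∧
      ∀ x y : PresentedMonoid (BRel n),
        IsLeast {K | IsBPart K ∧ F x ≤ K ∧ F y ≤ K} (F (x * y)) := by
  refine ⟨Subtype.val ∘ BRel.epsHom n, Subtype.val_injective.comp BRel.epsHom_injective, ?_, ?_,
    fun a => rfl, fun x y => ?_⟩
  · rw [Set.range_comp, BRel.epsHom_surjective.range_eq, Set.image_univ,
      Subtype.range_coe_subtype]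
  · simp only [Function.comp_apply, map_one, BPartition.one_def, BPartition.coe_bot]
  · simp only [Function.comp_apply, map_mul, BPartition.mul_def]
    exact BPartition.isLeast_coe_sup _ _

/-- There is a bijection `F` from the monoid presented by the
generators `e_{i,j}` subject to (PB1)–(PB5) onto the set `Pₙᴮ` of `Bₙ`-partitions,
mapping the identity to `⊥` and each generator `e_{i,j}` to `ε_{i,j}`, and carrying
the product to the product `·_B` (the least common `Bₙ`-coarsening, which exists):
`F(x·y)` is the least `Bₙ`-partition coarser than both `F(x)` and `F(y)`. -/
theorem presentedMonoid_bijection_PnB (n : ℕ) (hn : 2 ≤ n) :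
    ∃ F : PresentedMonoid (BRel n) → Setoid (PM n),
      Function.Injective F ∧
      Set.range F = {I | IsBPart I} ∧
      F 1 = ⊥ ∧
      (∀ a : BGen n, F (PresentedMonoid.of (BRel n) a) = eps a.1.1 a.1.2) ∧
      ∀ x y : PresentedMonoid (BRel n),
        IsLeast {K | IsBPart K ∧ F x ≤ K ∧ F y ≤ K} (F (x * y)) :=
  presentedMonoid_bijection_PnB_general n
end
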